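/- arXiv:1302.1035 — 2 statements merged into one kernel-verified Lean document; each statement's English description precedes it below -/
import Mathlib

section
/- Let n be a natural number and C a linear subspace of (Fin n → ZMod 2) that is doubly even, i.e., every codeword c ∈ C has Hamming weight divisible by 4. Let v : Fin n → ZMod 2 with v ∈ C⊥. Then for every c ∈ C, the Hamming weight of c + v is congruent to the Hamming weight of v modulo 4. Consequently, if P is the diagonal linear map on ((Fin n → ZMod 2) → ℂ) defined on the standard basis by P e_x = i^{wt(x)} e_x (with i the imaginary unit and wt the Hamming weight), then P ψ_v = i^{wt(v)} ψ_v, where ψ_v = (Fintype.card C : ℝ)^(-1/2) • ∑_{c ∈ C} e_{c+v}. -/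
open scoped Classical

/-- The Hamming weight of a binary vector. -/
def wt {n : ℕ} (x : Fin n → ZMod 2) : ℕ :=
  (Finset.univ.filter fun i => x i ≠ 0).card

/-- The standard basis vector `e_x` of `(Fin n → ZMod 2) → ℂ` supported at `x`. -/
noncomputable def stdVec {n : ℕ} (x : Fin n → ZMod 2) : (Fin n → ZMod 2) → ℂ :=
  fun y => if y = x then 1 else 0

/-- The CSS basis state `ψ_v = |C|^(-1/2) ∑_{c ∈ C} e_{c+v}`. -/
noncomputable def psi {n : ℕ} (C : Submodule (ZMod 2) (Fin n → ZMod 2))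
    (v : Fin n → ZMod 2) : (Fin n → ZMod 2) → ℂ :=
  ((Fintype.card C : ℝ) ^ (-(1 : ℝ)/2)) • ∑ c : C, stdVec ((c : Fin n → ZMod 2) + v)

/-- The dual of a binary linear code. -/
def dualCode {n : ℕ} (C : Submodule (ZMod 2) (Fin n → ZMod 2)) :
    Submodule (ZMod 2) (Fin n → ZMod 2) where
  carrier := {x | ∀ c ∈ C, ∑ i, x i * c i = 0}
  zero_mem' := by intro c hc; simp
  add_mem' := by
    intro a b ha hb c hc
    have h1 := ha c hc
    have h2 := hb c hc
    simp only [Pi.add_apply, add_mul, Finset.sum_add_distrib, h1, h2, add_zero]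
  smul_mem' := by
    intro r x hx c hc
    simp only [Pi.smul_apply, smul_eq_mul, mul_assoc, ← Finset.mul_sum, hx c hc, mul_zero]

/-!
If `s` is the number of common support positions of `x` and `y`, then
`wt (x + y) + 2 s = wt x + wt y` and `s ≡ ∑ i, x i * y i (mod 2)`. For `c ∈ C` and `v ∈ C⊥`
the overlap of `c` and `v` is therefore even, so `wt (c + v) ≡ wt c + wt v ≡ wt v (mod 4)`.
Hence every basis vector `e_{c+v}` occurring in `ψ_v` is an eigenvector of `P` with the same
eigenvalue `i ^ wt v`, and so is `ψ_v`.
-/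

namespace BinaryCode

variable {n : ℕ}

def overlap (x y : Fin n → ZMod 2) : ℕ :=
  (Finset.univ.filter fun i => x i ≠ 0 ∧ y i ≠ 0).card

theorem wt_add_add_two_mul_overlap (x y : Fin n → ZMod 2) :
    wt (x + y) + 2 * overlap x y = wt x + wt y := by
  simp only [wt, overlap, Finset.card_filter, Finset.mul_sum, ← Finset.sum_add_distrib]
  refine Finset.sum_congr rfl fun i _ => ?_
  rw [Pi.add_apply]
  generalize x i = a; generalize y i = b
  revert a b; decide

theorem overlap_cast_eq_sum_mul (x y : Fin n → ZMod 2) :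
    (overlap x y : ZMod 2) = ∑ i, x i * y i := by
  simp only [overlap, Finset.card_filter]
  push_cast
  refine Finset.sum_congr rfl fun i _ => ?_
  generalize x i = a; generalize y i = b
  revert a b; decide

theorem two_dvd_overlap_of_mem_dualCode {C : Submodule (ZMod 2) (Fin n → ZMod 2)}
    {v : Fin n → ZMod 2} (hv : v ∈ dualCode C) {c : Fin n → ZMod 2} (hc : c ∈ C) :
    2 ∣ overlap c v := by
  rw [← ZMod.natCast_eq_zero_iff, overlap_cast_eq_sum_mul]
  simpa only [mul_comm] using hv c hc

theorem wt_add_modEq_of_doublyEven {C : Submodule (ZMod 2) (Fin n → ZMod 2)}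
    (hC : ∀ c ∈ C, 4 ∣ wt c) {v : Fin n → ZMod 2} (hv : v ∈ dualCode C)
    {c : Fin n → ZMod 2} (hc : c ∈ C) : wt (c + v) ≡ wt v [MOD 4] := by
  have hsum := wt_add_add_two_mul_overlap c v
  have hoverlap := two_dvd_overlap_of_mem_dualCode hv hc
  have hwt := hC c hc
  unfold Nat.ModEq
  omega

theorem map_psi_eq_smul {C : Submodule (ZMod 2) (Fin n → ZMod 2)} {v : Fin n → ZMod 2}
    (P : ((Fin n → ZMod 2) → ℂ) →ₗ[ℂ] ((Fin n → ZMod 2) → ℂ)) (a : ℂ)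
    (hP : ∀ c ∈ C, P (stdVec (c + v)) = a • stdVec (c + v)) :
    P (psi C v) = a • psi C v := by
  rw [psi, P.map_smul_of_tower, map_sum, Finset.sum_congr rfl fun (c : C) _ => hP c c.2,
    ← Finset.smul_sum, smul_comm]

end BinaryCode

/-- For a doubly-even binary code `C` and `v ∈ C⊥`, the weight of `c + v` is congruent
to the weight of `v` mod 4; consequently the transversal phase gate
`P e_x = i^{wt x} e_x` acts on the CSS state `ψ_v` as the scalar `i^{wt v}`. -/
theorem doubly_even_phase_gate
    {n : ℕ} (C : Submodule (ZMod 2) (Fin n → ZMod 2))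
    (hC : ∀ c ∈ C, 4 ∣ wt c)
    (v : Fin n → ZMod 2) (hv : v ∈ dualCode C) :
    (∀ c ∈ C, wt (c + v) ≡ wt v [MOD 4]) ∧
    ∀ P : ((Fin n → ZMod 2) → ℂ) →ₗ[ℂ] ((Fin n → ZMod 2) → ℂ),
      (∀ x : Fin n → ZMod 2, P (stdVec x) = Complex.I ^ wt x • stdVec x) →
      P (psi C v) = Complex.I ^ wt v • psi C v := by
  have hmod : ∀ c ∈ C, wt (c + v) ≡ wt v [MOD 4] := fun c hc =>
    BinaryCode.wt_add_modEq_of_doublyEven hC hv hc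
  refine ⟨hmod, fun P hP => BinaryCode.map_psi_eq_smul P _ fun c hc => ?_⟩
  rw [hP, Complex.I_pow_eq_pow_mod, hmod c hc, ← Complex.I_pow_eq_pow_mod]
end

section
/- Let n be a natural number, C a linear subspace of (Fin n → ZMod 2), and v : Fin n → ZMod 2. Let H_n be the linear map on ((Fin n → ZMod 2) → ℂ) defined on the standard basis by H_n e_x = 2^{-n/2} ∑_y (-1)^{⟨x,y⟩} e_y, where ⟨x,y⟩ ∈ {0,1} denotes the value of ∑ i, x i * y i in ZMod 2 lifted to an integer exponent. Then H_n ψ_v = (Fintype.card C / 2^n : ℝ)^{1/2} • ∑_{y ∈ C⊥} (-1)^{⟨v,y⟩} e_y, where ψ_v = (Fintype.card C : ℝ)^(-1/2) • ∑_{c ∈ C} e_{c+v}. In particular, the transversal Hadamard transformation maps the CSS state ψ_v for the code C to a superposition supported on the dual code C⊥. -/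
open scoped Classical

/-! For a fixed `y`, the map `c ↦ (-1)^⟨c, y⟩` is an additive character of `C`, trivial exactly
when `y ∈ C⊥`. Expanding `H_n ψ_v` in the standard basis, the coefficient of `e_y` is
`|C|^{-1/2} 2^{-n/2} (-1)^⟨v, y⟩ ∑_{c ∈ C} (-1)^⟨c, y⟩`, and orthogonality of characters makes the
inner sum `|C|` on `C⊥` and `0` elsewhere. -/

open Finset

namespace CSS

variable {R : Type*} [CommRing R]

variable (R) in
def signChar : AddChar (ZMod 2) R :=
  AddChar.zmodChar 2 (neg_one_sq : (-1 : R) ^ 2 = 1)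

lemma signChar_apply (a : ZMod 2) : signChar R a = (-1) ^ a.val := rfl

lemma signChar_eq_one_iff [Nontrivial R] (hR : ringChar R ≠ 2) {a : ZMod 2} :
    signChar R a = 1 ↔ a = 0 := by
  fin_cases a
  · exact iff_of_true (AddChar.map_zero_eq_one _) rfl
  · show signChar R 1 = 1 ↔ (1 : ZMod 2) = 0
    exact iff_of_false
      (by rw [signChar_apply, ZMod.val_one, pow_one]; exact Ring.neg_one_ne_one_of_char_ne_two hR)
      one_ne_zero

variable {n : ℕ} (C : Submodule (ZMod 2) (Fin n → ZMod 2))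

lemma mem_dualCode_iff {y : Fin n → ZMod 2} : y ∈ dualCode C ↔ ∀ c ∈ C, c ⬝ᵥ y = 0 :=
  forall₂_congr fun c _ => by rw [dotProduct_comm]; rfl

lemma sum_signChar_dotProduct [IsDomain R] (hR : ringChar R ≠ 2) (y : Fin n → ZMod 2) :
    ∑ c : C, signChar R ((c : Fin n → ZMod 2) ⬝ᵥ y) =
      if y ∈ dualCode C then (Fintype.card C : R) else 0 := by
  let ψ : AddChar C R := (signChar R).compAddMonoidHom
    (AddMonoidHom.mk' (fun c : C => (c : Fin n → ZMod 2) ⬝ᵥ y) fun _ _ => add_dotProduct _ _ _)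
  have hψ : ψ = 0 ↔ y ∈ dualCode C := by
    simp [ψ, AddChar.eq_zero_iff, signChar_eq_one_iff hR, mem_dualCode_iff]
  rw [← hψ]
  exact AddChar.sum_eq_ite ψ

lemma sum_sum_signChar_add_dotProduct_smul [IsDomain R] (hR : ringChar R ≠ 2)
    {M : Type*} [AddCommMonoid M] [Module R M] (v : Fin n → ZMod 2)
    (f : (Fin n → ZMod 2) → M) :
    ∑ c : C, ∑ y, signChar R (((c : Fin n → ZMod 2) + v) ⬝ᵥ y) • f y =
      Fintype.card C • ∑ y : dualCode C, signChar R (v ⬝ᵥ y) • f y := by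
  calc _ = ∑ y, (∑ c : C, signChar R ((c : Fin n → ZMod 2) ⬝ᵥ y)) •
          signChar R (v ⬝ᵥ y) • f y := by
        rw [sum_comm]
        simp only [add_dotProduct, AddChar.map_add_eq_mul, sum_smul, mul_smul]
    _ = ∑ y, if y ∈ dualCode C then Fintype.card C • signChar R (v ⬝ᵥ y) • f y else 0 := by
        simp only [sum_signChar_dotProduct C hR, ite_smul, Nat.cast_smul_eq_nsmul, zero_smul]
    _ = _ := by
        rw [← sum_filter, sum_subtype (p := (· ∈ dualCode C)) _ (fun y => by simp), smul_sum]

lemma rpow_neg_half_mul_rpow_neg_half_mul_self {a b : ℝ} (ha : 0 ≤ a) (hb : 0 ≤ b) :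
    a ^ (-(1 : ℝ) / 2) * b ^ (-(1 : ℝ) / 2) * a = (a / b) ^ ((1 : ℝ) / 2) := by
  rw [neg_div, Real.rpow_neg ha, Real.rpow_neg hb, ← Real.sqrt_eq_rpow, ← Real.sqrt_eq_rpow,
    ← Real.sqrt_eq_rpow, Real.sqrt_div' _ hb,
    mul_right_comm, inv_mul_eq_div, Real.div_sqrt, div_eq_mul_inv]

lemma two_rpow_neg_natCast_div_two (k : ℕ) :
    (2 : ℝ) ^ (-(k : ℝ) / 2) = ((2 : ℝ) ^ k) ^ (-(1 : ℝ) / 2) := by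
  rw [← Real.rpow_natCast, ← Real.rpow_mul zero_le_two]
  ring_nf

end CSS

open CSS

/-- The transversal Hadamard transform `H_n e_x = 2^{-n/2} ∑_y (-1)^{⟨x,y⟩} e_y`
maps the CSS state `ψ_v` of the code `C` to a signed superposition supported on the
dual code `C⊥`. -/
theorem transversal_Hadamard_on_CSS_state
    {n : ℕ} (C : Submodule (ZMod 2) (Fin n → ZMod 2)) (v : Fin n → ZMod 2)
    (Hn : ((Fin n → ZMod 2) → ℂ) →ₗ[ℂ] ((Fin n → ZMod 2) → ℂ))
    (hH : ∀ x : Fin n → ZMod 2,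
      Hn (stdVec x) = ((2 : ℝ) ^ (-(n : ℝ)/2)) •
        ∑ y : Fin n → ZMod 2, ((-1 : ℂ) ^ (∑ i, x i * y i).val) • stdVec y) :
    Hn (psi C v) = (((Fintype.card C : ℝ) / 2 ^ n) ^ ((1 : ℝ)/2)) •
      ∑ y : dualCode C,
        ((-1 : ℂ) ^ (∑ i, v i * (y : Fin n → ZMod 2) i).val) •
          stdVec (y : Fin n → ZMod 2) := by
  -- `signChar ℂ a` unfolds to `(-1) ^ a.val` and `x ⬝ᵥ y` to `∑ i, x i * y i`.
  have hH' : ∀ x, Hn (stdVec x) =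
      (2 : ℝ) ^ (-(n : ℝ) / 2) • ∑ y, signChar ℂ (x ⬝ᵥ y) • stdVec y := hH
  have hcoef : (Fintype.card C : ℝ) ^ (-(1 : ℝ) / 2) * (2 : ℝ) ^ (-(n : ℝ) / 2) * Fintype.card C
      = ((Fintype.card C : ℝ) / 2 ^ n) ^ ((1 : ℝ) / 2) := by
    rw [two_rpow_neg_natCast_div_two, rpow_neg_half_mul_rpow_neg_half_mul_self] <;> positivity
  calc Hn (psi C v)
      = ((Fintype.card C : ℝ) ^ (-(1 : ℝ) / 2) * (2 : ℝ) ^ (-(n : ℝ) / 2)) •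
          ∑ c : C, ∑ y, signChar ℂ (((c : Fin n → ZMod 2) + v) ⬝ᵥ y) • stdVec y := by
        simp only [psi, LinearMap.map_smul_of_tower, map_sum, hH', ← smul_sum, smul_smul]
    _ = ((Fintype.card C : ℝ) ^ (-(1 : ℝ) / 2) * (2 : ℝ) ^ (-(n : ℝ) / 2)) •
          Fintype.card C • ∑ y : dualCode C, signChar ℂ (v ⬝ᵥ y) • stdVec (y : Fin n → ZMod 2) := by
        rw [sum_sum_signChar_add_dotProduct_smul C (by simp [ringChar.eq_zero])]
    _ = _ := by
        rw [← Nat.cast_smul_eq_nsmul ℝ, smul_smul, hcoef]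
        rfl
end
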